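/- Consider the temporal election E with 6 voters N = {1,…,6}, 6 rounds, and candidates {x, y, z, c_1, …, c_6}, where in rounds 1 and 2 voters 1 and 2 each approve exactly {x}, voters 3 and 4 each approve exactly {y}, voters 5 and 6 each approve exactly {z}, and in each of rounds 3 through 6 each voter i approves exactly {c_i}. Then no outcome for E provides strong extended justified representation (sEJR). (In particular, there exists a temporal election in which every voter approves exactly one candidate per round, the number of voters divides the number of rounds, and no outcome provides sEJR.) -/
import Mathlib


open Finset

/-- Satisfaction of the voter group `S` over the rounds in `R` under the
(sub)outcome `o`: the number of rounds `r ∈ R` in which the selected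
candidate `o r` is approved by at least one voter in `S`. -/
def satR {C : Type*} [DecidableEq C] {n ℓ : ℕ} (A : Fin n → Fin ℓ → Finset C)
    (S : Finset (Fin n)) (R : Finset (Fin ℓ)) (o : Fin ℓ → C) : ℕ :=
  (R.filter fun r => o r ∈ S.biUnion fun i => A i r).card

/-- Strong extended justified representation. -/
def providesSEJR {C : Type*} [DecidableEq C] {n ℓ : ℕ}
    (A : Fin n → Fin ℓ → Finset C) (o : Fin ℓ → C) : Prop :=
  ∀ t : ℕ, 0 < t → ∀ S : Finset (Fin n), S.Nonempty →
    (∃ R : Finset (Fin ℓ), R.card = t ∧ ∀ r ∈ R, ∃ c : C, ∀ i ∈ S, c ∈ A i r) →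
    ∃ i ∈ S, min t (ℓ * S.card / n) ≤ satR A {i} univ o


/-- The election of Proposition D.1: 6 voters, 6 rounds, candidates
`x = 0, y = 1, z = 2, c_i = 2 + i` (as elements of `Fin 9`).  In rounds 1–2
(indices `0, 1`) voters 1–2 approve exactly `{x}`, voters 3–4 exactly `{y}`,
voters 5–6 exactly `{z}`; in rounds 3–6 voter `i` approves exactly `{c_i}`. -/
def A₁₉ : Fin 6 → Fin 6 → Finset (Fin 9) := fun i r =>
  if r.val ≤ 1 then {⟨i.val / 2, by have := i.isLt; omega⟩}
  else {⟨3 + i.val, by have := i.isLt; omega⟩}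

lemma satR_single (o : Fin 6 → Fin 9) (i : Fin 6) :
    satR A₁₉ {i} univ o = (univ.filter fun r => o r ∈ A₁₉ i r).card := by
  simp [satR]

lemma round_bound : ∀ (r : Fin 6) (v : Fin 9),
    (∑ i : Fin 6, if v ∈ A₁₉ i r then 1 else 0) ≤ (if r.val ≤ 1 then 2 else 1) := by
  decide

lemma upper (o : Fin 6 → Fin 9) :
    ∑ i : Fin 6, (univ.filter fun r => o r ∈ A₁₉ i r).card ≤ 8 := by
  have h1 : ∀ i : Fin 6, (univ.filter fun r => o r ∈ A₁₉ i r).card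
      = ∑ r : Fin 6, if o r ∈ A₁₉ i r then 1 else 0 := by
    intro i; rw [Finset.card_filter]
  calc ∑ i : Fin 6, (univ.filter fun r => o r ∈ A₁₉ i r).card
      = ∑ i : Fin 6, ∑ r : Fin 6, if o r ∈ A₁₉ i r then 1 else 0 := by
        exact Finset.sum_congr rfl fun i _ => h1 i
    _ = ∑ r : Fin 6, ∑ i : Fin 6, if o r ∈ A₁₉ i r then 1 else 0 := Finset.sum_comm
    _ ≤ ∑ r : Fin 6, (if r.val ≤ 1 then 2 else 1) :=
        Finset.sum_le_sum fun r _ => round_bound r (o r)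
    _ = 8 := by decide

/-- No outcome for this election provides sEJR (even though each voter
approves exactly one candidate per round and the number of voters divides the
number of rounds). -/
theorem no_outcome_provides_sEJR : ∀ o : Fin 6 → Fin 9, ¬ providesSEJR A₁₉ o := by
  intro o h
  have hsing : ∀ i : Fin 6, 1 ≤ (univ.filter fun r => o r ∈ A₁₉ i r).card := by
    intro i
    have hne : ∀ r : Fin 6, (A₁₉ i r).Nonempty := by
      intro r; unfold A₁₉; split <;> exact Finset.singleton_nonempty _
    obtain ⟨j, hj, hle⟩ := h 6 (by norm_num) {i} ⟨i, mem_singleton_self i⟩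
      ⟨univ, by simp, fun r _ => ⟨(hne r).choose, fun i' hi' => by
        rw [mem_singleton] at hi'; subst hi'; exact (hne r).choose_spec⟩⟩
    rw [mem_singleton] at hj; subst hj
    rw [satR_single] at hle
    simpa using hle
  have hpair : ∀ p : Fin 6 × Fin 6 × Fin 9, p.1 ≠ p.2.1 →
      (∀ r : Fin 6, r.val ≤ 1 → p.2.2 ∈ A₁₉ p.1 r ∧ p.2.2 ∈ A₁₉ p.2.1 r) →
      ∃ i ∈ ({p.1, p.2.1} : Finset (Fin 6)),
        2 ≤ (univ.filter fun r => o r ∈ A₁₉ i r).card := by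
    rintro ⟨a, b, c⟩ hab hc
    obtain ⟨j, hj, hle⟩ := h 2 (by norm_num) {a, b} ⟨a, by simp⟩
      ⟨{0, 1}, by decide, fun r hr => ⟨c, fun i' hi' => by
        have hr' : r.val ≤ 1 := by fin_cases hr <;> decide
        rcases mem_insert.mp hi' with h' | h'
        · subst h'; exact (hc r hr').1
        · rw [mem_singleton] at h'; subst h'; exact (hc r hr').2⟩⟩
    refine ⟨j, hj, ?_⟩
    rw [satR_single] at hle
    have hcard : ({a, b} : Finset (Fin 6)).card = 2 := by
      rw [card_insert_of_notMem (by simpa using hab), card_singleton]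
    rw [hcard] at hle
    simpa using hle
  obtain ⟨w0, hw0, h0⟩ := hpair (0, 1, 0) (by decide) (by decide)
  obtain ⟨w1, hw1, h1⟩ := hpair (2, 3, 1) (by decide) (by decide)
  obtain ⟨w2, hw2, h2⟩ := hpair (4, 5, 2) (by decide) (by decide)
  have hup := upper o
  rw [Fin.sum_univ_six] at hup
  have g0 := hsing 0; have g1 := hsing 1; have g2 := hsing 2
  have g3 := hsing 3; have g4 := hsing 4; have g5 := hsing 5
  simp only [mem_insert, mem_singleton] at hw0 hw1 hw2
  rcases hw0 with h' | h' <;> subst h' <;>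
    rcases hw1 with h' | h' <;> subst h' <;>
      rcases hw2 with h' | h' <;> subst h' <;> omega
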